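/- arXiv:2505.02562 — 2 statements merged into one kernel-verified Lean document; each statement's English description precedes it below -/
import Mathlib

section
/- Let F, F₁ be positive definite symmetric matrices, D invertible symmetric with ‖D⁻¹(F₁ - F)D⁻¹‖ ≤ δ < 1 and ‖D F⁻¹ D‖ ≤ 1, and let Q be any matrix and 𝒜 any vector. Then ‖Q(F₁⁻¹ - F⁻¹)𝒜‖ ≤ ‖Q F⁻¹ D‖ · δ · (1/(1-δ)) · ‖D F⁻¹ 𝒜‖. -/
open scoped Matrix.Norms.L2Operator RealInnerProductSpace
open Matrix

noncomputable def vnorm {p : ℕ} (v : Fin p → ℝ) : ℝ :=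
  ‖(WithLp.equiv 2 (Fin p → ℝ)).symm v‖

/-! Writing `M = D⁻¹ (F - F₁) D⁻¹`, the resolvent identity `F₁⁻¹ - F⁻¹ = F⁻¹ (F - F₁) F₁⁻¹` becomes
`F₁⁻¹ - F⁻¹ = (F⁻¹ D) M (D F₁⁻¹)`. Multiplying it on the left by `D` gives
`D F₁⁻¹ 𝒜 = D F⁻¹ 𝒜 + (D F⁻¹ D) M (D F₁⁻¹ 𝒜)`, so `‖D F⁻¹ D‖ ≤ 1` gives
`‖D F₁⁻¹ 𝒜‖ ≤ ‖D F⁻¹ 𝒜‖ + δ ‖D F₁⁻¹ 𝒜‖`,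
i.e. `‖D F₁⁻¹ 𝒜‖ ≤ ‖D F⁻¹ 𝒜‖ / (1 - δ)`. Multiplying it on the left by `Q` and taking norms
factor by factor then gives the estimate. -/

theorem Matrix.inv_sub_inv_eq_mul_conj {n α : Type*} [Fintype n] [DecidableEq n] [CommRing α]
    {F F₁ : Matrix n n α} (hF : IsUnit F ↔ IsUnit F₁) (D : Matrix n n α) (hD : IsUnit D.det) :
    F₁⁻¹ - F⁻¹ = F⁻¹ * D * (D⁻¹ * (F - F₁) * D⁻¹) * (D * F₁⁻¹) := by
  calc F₁⁻¹ - F⁻¹ = F⁻¹ * (F - F₁) * F₁⁻¹ := by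
        rw [← neg_sub, inv_sub_inv hF, ← neg_sub F, Matrix.mul_neg, Matrix.neg_mul, neg_neg]
    _ = F⁻¹ * (D * D⁻¹) * (F - F₁) * (D⁻¹ * D) * F₁⁻¹ := by
        rw [mul_nonsing_inv D hD, nonsing_inv_mul D hD, Matrix.mul_one, Matrix.mul_one]
    _ = F⁻¹ * D * (D⁻¹ * (F - F₁) * D⁻¹) * (D * F₁⁻¹) := by
        simp only [Matrix.mul_assoc]

theorem vnorm_nonneg {n : ℕ} (x : Fin n → ℝ) : 0 ≤ vnorm x :=
  norm_nonneg _

theorem vnorm_add_le {n : ℕ} (x y : Fin n → ℝ) : vnorm (x + y) ≤ vnorm x + vnorm y :=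
  norm_add_le _ _

theorem vnorm_mulVec_le {m n : ℕ} (A : Matrix (Fin m) (Fin n) ℝ) (x : Fin n → ℝ) :
    vnorm (A *ᵥ x) ≤ ‖A‖ * vnorm x :=
  A.l2_opNorm_mulVec _

theorem vnorm_mul_mulVec_le {m n k : ℕ} (A : Matrix (Fin m) (Fin n) ℝ)
    (B : Matrix (Fin n) (Fin k) ℝ) (x : Fin k → ℝ) :
    vnorm ((A * B) *ᵥ x) ≤ ‖A‖ * vnorm (B *ᵥ x) := by
  rw [← mulVec_mulVec]
  exact vnorm_mulVec_le A _

theorem vnorm_mul_inv_mulVec_le {p : ℕ} {F F₁ D : Matrix (Fin p) (Fin p) ℝ}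
    (hF : IsUnit F ↔ IsUnit F₁) (hD : IsUnit D.det) {δ : ℝ} (hδ : δ < 1)
    (hM : ‖D⁻¹ * (F - F₁) * D⁻¹‖ ≤ δ) (hDF : ‖D * F⁻¹ * D‖ ≤ 1) (x : Fin p → ℝ) :
    vnorm ((D * F₁⁻¹) *ᵥ x) ≤ 1 / (1 - δ) * vnorm ((D * F⁻¹) *ᵥ x) := by
  set M := D⁻¹ * (F - F₁) * D⁻¹
  have hsplit : (D * F₁⁻¹) *ᵥ x = (D * F⁻¹) *ᵥ x + (D * F⁻¹ * D * (M * (D * F₁⁻¹))) *ᵥ x := by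
    have h : D * F₁⁻¹ = D * F⁻¹ + D * F⁻¹ * D * (M * (D * F₁⁻¹)) :=
      calc D * F₁⁻¹ = D * F⁻¹ + D * (F₁⁻¹ - F⁻¹) := by rw [Matrix.mul_sub, add_sub_cancel]
        _ = _ := by rw [inv_sub_inv_eq_mul_conj hF D hD]; simp only [Matrix.mul_assoc, M]
    rw [← add_mulVec, ← h]
  have hcorr : vnorm ((D * F⁻¹ * D * (M * (D * F₁⁻¹))) *ᵥ x) ≤ δ * vnorm ((D * F₁⁻¹) *ᵥ x) :=
    calc _ ≤ ‖D * F⁻¹ * D‖ * vnorm ((M * (D * F₁⁻¹)) *ᵥ x) := vnorm_mul_mulVec_le _ _ _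
      _ ≤ 1 * (‖M‖ * vnorm ((D * F₁⁻¹) *ᵥ x)) := by
          gcongr
          · exact vnorm_nonneg _
          · exact vnorm_mul_mulVec_le _ _ _
      _ ≤ δ * vnorm ((D * F₁⁻¹) *ᵥ x) := by
          rw [one_mul]
          exact mul_le_mul_of_nonneg_right hM (vnorm_nonneg _)
  have hself : vnorm ((D * F₁⁻¹) *ᵥ x) ≤ vnorm ((D * F⁻¹) *ᵥ x) + δ * vnorm ((D * F₁⁻¹) *ᵥ x) :=
    calc _ = vnorm ((D * F⁻¹) *ᵥ x + (D * F⁻¹ * D * (M * (D * F₁⁻¹))) *ᵥ x) := by rw [← hsplit]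
      _ ≤ _ := (vnorm_add_le _ _).trans (add_le_add_right hcorr _)
  rw [one_div_mul_eq_div, le_div_iff₀ (sub_pos.mpr hδ)]
  linarith

theorem stmt_10_general {p q : ℕ} (F F₁ D : Matrix (Fin p) (Fin p) ℝ)
    (hF : F.PosDef) (hF₁ : F₁.PosDef) (hDu : IsUnit D.det)
    (δ : ℝ) (hδ : δ < 1) (h : ‖D⁻¹ * (F₁ - F) * D⁻¹‖ ≤ δ) (hDF : ‖D * F⁻¹ * D‖ ≤ 1)
    (Q : Matrix (Fin q) (Fin p) ℝ) (𝒜 : Fin p → ℝ) :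
    vnorm ((Q * (F₁⁻¹ - F⁻¹)) *ᵥ 𝒜) ≤
      ‖Q * F⁻¹ * D‖ * δ * (1 / (1 - δ)) * vnorm (D *ᵥ F⁻¹ *ᵥ 𝒜) := by
  have hunit : IsUnit F ↔ IsUnit F₁ := iff_of_true hF.isUnit hF₁.isUnit
  have hM : ‖D⁻¹ * (F - F₁) * D⁻¹‖ ≤ δ := by
    have hneg : D⁻¹ * (F - F₁) * D⁻¹ = -(D⁻¹ * (F₁ - F) * D⁻¹) := by
      simp only [Matrix.mul_sub, Matrix.sub_mul, neg_sub]
    rw [hneg, norm_neg]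
    exact h
  have hδ₀ : 0 ≤ δ := (norm_nonneg _).trans h
  calc vnorm ((Q * (F₁⁻¹ - F⁻¹)) *ᵥ 𝒜)
      = vnorm ((Q * F⁻¹ * D * ((D⁻¹ * (F - F₁) * D⁻¹) * (D * F₁⁻¹))) *ᵥ 𝒜) := by
        rw [inv_sub_inv_eq_mul_conj hunit D hDu]
        simp only [Matrix.mul_assoc]
    _ ≤ ‖Q * F⁻¹ * D‖ * (δ * (1 / (1 - δ) * vnorm ((D * F⁻¹) *ᵥ 𝒜))) := by
        refine (vnorm_mul_mulVec_le _ _ _).trans ?_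
        gcongr
        refine (vnorm_mul_mulVec_le _ _ _).trans ?_
        gcongr
        · exact vnorm_nonneg _
        · exact vnorm_mul_inv_mulVec_le hunit hDu hδ hM hDF 𝒜
    _ = ‖Q * F⁻¹ * D‖ * δ * (1 / (1 - δ)) * vnorm (D *ᵥ F⁻¹ *ᵥ 𝒜) := by
        rw [mulVec_mulVec]
        ring

theorem stmt_10 {p q : ℕ} (F F₁ D : Matrix (Fin p) (Fin p) ℝ)
    (hF : F.PosDef) (hF₁ : F₁.PosDef) (hDs : D.IsSymm) (hDu : IsUnit D.det)
    (δ : ℝ) (hδ : δ < 1) (h : ‖D⁻¹ * (F₁ - F) * D⁻¹‖ ≤ δ) (hDF : ‖D * F⁻¹ * D‖ ≤ 1)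
    (Q : Matrix (Fin q) (Fin p) ℝ) (𝒜 : Fin p → ℝ) :
    vnorm ((Q * (F₁⁻¹ - F⁻¹)) *ᵥ 𝒜) ≤
      ‖Q * F⁻¹ * D‖ * δ * (1 / (1 - δ)) * vnorm (D *ᵥ F⁻¹ *ᵥ 𝒜) :=
  stmt_10_general F F₁ D hF hF₁ hDu δ hδ h hDF Q 𝒜
end

section
/- Let F, F₁ be symmetric positive definite matrices and D symmetric invertible with ‖D⁻¹(F₁ - F)D⁻¹‖ ≤ δ and ‖D F⁻¹ D‖ ≤ 1, ‖D F₁⁻¹ D‖ ≤ 1/(1-δ) for δ < 1. Then ‖D(F₁⁻¹ - F⁻¹)u‖ ≤ (δ/(1-δ))‖D F⁻¹ u‖ for every vector u. -/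
/-! Since `F₁⁻¹ - F⁻¹ = F₁⁻¹ (F - F₁) F⁻¹`, inserting `D D⁻¹` twice factors `D (F₁⁻¹ - F⁻¹)` as
`(D F₁⁻¹ D) (D⁻¹ (F - F₁) D⁻¹) (D F⁻¹)`, and submultiplicativity of the ℓ² operator norm bounds
the first two factors by `1 / (1 - δ)` and `δ`. The norm does not see the sign of `F - F₁`. -/

open scoped Matrix.Norms.L2Operator RealInnerProductSpace
open Matrix

theorem vnorm_mulVec_le_s15 {p : ℕ} (M : Matrix (Fin p) (Fin p) ℝ) (v : Fin p → ℝ) :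
    vnorm (M *ᵥ v) ≤ ‖M‖ * vnorm v :=
  M.l2_opNorm_mulVec ((WithLp.equiv 2 (Fin p → ℝ)).symm v)

theorem Matrix.mul_inv_sub_inv_eq_rescaled {n α : Type*} [Fintype n] [DecidableEq n] [CommRing α]
    {F F₁ D : Matrix n n α} (hFF₁ : IsUnit F ↔ IsUnit F₁) (hD : IsUnit D.det) :
    D * (F₁⁻¹ - F⁻¹) = D * F₁⁻¹ * D * (D⁻¹ * (F - F₁) * D⁻¹) * (D * F⁻¹) := by
  rw [inv_sub_inv hFF₁.symm]
  simp only [Matrix.mul_assoc, nonsing_inv_mul_cancel_left _ _ hD,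
    mul_nonsing_inv_cancel_left _ _ hD]

theorem stmt_15_general {p : ℕ} (F F₁ D : Matrix (Fin p) (Fin p) ℝ)
    (hF : F.PosDef) (hF₁ : F₁.PosDef) (hDu : IsUnit D.det)
    (δ : ℝ) (h : ‖D⁻¹ * (F₁ - F) * D⁻¹‖ ≤ δ)
    (hDF₁ : ‖D * F₁⁻¹ * D‖ ≤ 1 / (1 - δ))
    (u : Fin p → ℝ) :
    vnorm ((D * (F₁⁻¹ - F⁻¹)) *ᵥ u) ≤ (δ / (1 - δ)) * vnorm (D *ᵥ F⁻¹ *ᵥ u) := by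
  have hB : ‖D⁻¹ * (F - F₁) * D⁻¹‖ ≤ δ := by
    rw [← neg_sub, Matrix.mul_neg, Matrix.neg_mul, norm_neg]
    exact h
  have hA₀ : 0 ≤ 1 / (1 - δ) := (norm_nonneg _).trans hDF₁
  rw [mul_inv_sub_inv_eq_rescaled (iff_of_true hF.isUnit hF₁.isUnit) hDu, ← mulVec_mulVec]
  calc _ ≤ ‖D * F₁⁻¹ * D * (D⁻¹ * (F - F₁) * D⁻¹)‖ * vnorm ((D * F⁻¹) *ᵥ u) := vnorm_mulVec_le_s15 _ _
    _ ≤ ‖D * F₁⁻¹ * D‖ * ‖D⁻¹ * (F - F₁) * D⁻¹‖ * vnorm ((D * F⁻¹) *ᵥ u) :=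
      mul_le_mul_of_nonneg_right (l2_opNorm_mul _ _) (norm_nonneg _)
    _ ≤ 1 / (1 - δ) * δ * vnorm ((D * F⁻¹) *ᵥ u) := by
      gcongr
      · exact norm_nonneg _
    _ = δ / (1 - δ) * vnorm (D *ᵥ F⁻¹ *ᵥ u) := by
      rw [mulVec_mulVec]
      ring

theorem stmt_15 {p : ℕ} (F F₁ D : Matrix (Fin p) (Fin p) ℝ)
    (hF : F.PosDef) (hF₁ : F₁.PosDef) (hDs : D.IsSymm) (hDu : IsUnit D.det)
    (δ : ℝ) (hδ : δ < 1) (h : ‖D⁻¹ * (F₁ - F) * D⁻¹‖ ≤ δ)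
    (hDF : ‖D * F⁻¹ * D‖ ≤ 1) (hDF₁ : ‖D * F₁⁻¹ * D‖ ≤ 1 / (1 - δ))
    (u : Fin p → ℝ) :
    vnorm ((D * (F₁⁻¹ - F⁻¹)) *ᵥ u) ≤ (δ / (1 - δ)) * vnorm (D *ᵥ F⁻¹ *ᵥ u) :=
  stmt_15_general F F₁ D hF hF₁ hDu δ h hDF₁ u
end
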